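/- arXiv:2310.06064 — 7 statements merged into one kernel-verified Lean document; each statement's English description precedes it below -/
import Mathlib

section
/- Let n, k, ℓ be positive integers with n dividing k·ℓ, and set d = gcd(n, k), d' = gcd(n, ℓ). Then n · gcd(d', d'·k/n) · gcd(gcd(d, ℓ), d·ℓ/n) = d · d' · gcd(gcd(d, ℓ), d'·k/n). -/
/-- With d = gcd(n,k), d' = gcd(n,ℓ) and n ∣ k·ℓ:
`n * gcd(d', d'*k/n) * gcd(gcd(d,ℓ), d*ℓ/n) = d * d' * gcd(gcd(d,ℓ), d'*k/n)`. -/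
theorem stmt_2 (n k ℓ : ℕ) (hn : 0 < n) (hk : 0 < k) (hℓ : 0 < ℓ)
    (hdvd : n ∣ k * ℓ) :
    n * Nat.gcd (Nat.gcd n ℓ) (Nat.gcd n ℓ * k / n)
        * Nat.gcd (Nat.gcd (Nat.gcd n k) ℓ) (Nat.gcd n k * ℓ / n)
      = Nat.gcd n k * Nat.gcd n ℓ
        * Nat.gcd (Nat.gcd (Nat.gcd n k) ℓ) (Nat.gcd n ℓ * k / n) := by
  have hn' := hn.ne'
  have hk' := hk.ne'
  have hl' := hℓ.ne'
  have hd : 0 < Nat.gcd n k := Nat.gcd_pos_of_pos_left _ hn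
  have hd' : 0 < Nat.gcd n ℓ := Nat.gcd_pos_of_pos_left _ hn
  have hdvd1 : n ∣ Nat.gcd n ℓ * k := by
    have : n ∣ Nat.gcd (n * k) (ℓ * k) :=
      Nat.dvd_gcd ⟨k, rfl⟩ (by rwa [mul_comm ℓ k])
    rwa [Nat.gcd_mul_right] at this
  have hdvd2 : n ∣ Nat.gcd n k * ℓ := by
    have : n ∣ Nat.gcd (n * ℓ) (k * ℓ) :=
      Nat.dvd_gcd ⟨ℓ, rfl⟩ hdvd
    rwa [Nat.gcd_mul_right] at this
  have h1 : 0 < Nat.gcd n ℓ * k / n := Nat.div_pos (Nat.le_of_dvd (by positivity) hdvd1) hn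
  have h2 : 0 < Nat.gcd n k * ℓ / n := Nat.div_pos (Nat.le_of_dvd (by positivity) hdvd2) hn
  have hdl : 0 < Nat.gcd (Nat.gcd n k) ℓ := Nat.gcd_pos_of_pos_right _ hℓ
  have hL : 0 < n * Nat.gcd (Nat.gcd n ℓ) (Nat.gcd n ℓ * k / n)
        * Nat.gcd (Nat.gcd (Nat.gcd n k) ℓ) (Nat.gcd n k * ℓ / n) := by
    have := Nat.gcd_pos_of_pos_left (Nat.gcd n ℓ * k / n) hd'
    have := Nat.gcd_pos_of_pos_left (Nat.gcd n k * ℓ / n) hdl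
    positivity
  have hR : 0 < Nat.gcd n k * Nat.gcd n ℓ
        * Nat.gcd (Nat.gcd (Nat.gcd n k) ℓ) (Nat.gcd n ℓ * k / n) := by
    have := Nat.gcd_pos_of_pos_left (Nat.gcd n ℓ * k / n) hdl
    positivity
  rw [Nat.eq_iff_prime_padicValNat_eq _ _ hL.ne' hR.ne']
  intro p hp
  rw [← Nat.factorization_def _ hp, ← Nat.factorization_def _ hp]
  have hab : ∀ p : ℕ, n.factorization p ≤ k.factorization p + ℓ.factorization p := by
    intro p
    have := (Nat.factorization_le_iff_dvd hn' (by positivity)).2 hdvd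
    simpa [Nat.factorization_mul hk' hl'] using this p
  rw [Nat.factorization_mul (Nat.mul_ne_zero hn' (Nat.gcd_pos_of_pos_left _ hd').ne') (Nat.gcd_pos_of_pos_left _ hdl).ne',
      Nat.factorization_mul hn' (Nat.gcd_pos_of_pos_left _ hd').ne',
      Nat.factorization_mul (Nat.mul_ne_zero hd.ne' hd'.ne') (Nat.gcd_pos_of_pos_left _ hdl).ne',
      Nat.factorization_mul hd.ne' hd'.ne',
      Nat.factorization_gcd hd'.ne' h1.ne',
      Nat.factorization_gcd hdl.ne' h2.ne',
      Nat.factorization_gcd hdl.ne' h1.ne',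
      Nat.factorization_gcd hd.ne' hl',
      Nat.factorization_div hdvd1, Nat.factorization_div hdvd2,
      Nat.factorization_mul hd'.ne' hk', Nat.factorization_mul hd.ne' hl',
      Nat.factorization_gcd hn' hk', Nat.factorization_gcd hn' hl']
  simp only [Finsupp.add_apply, Finsupp.inf_apply, Finsupp.tsub_apply, Finsupp.coe_add,
    Pi.add_apply]
  have := hab p
  omega
end

section
/- Let R be a commutative ring and a ∈ R. Define φ : R × R → R × R by φ(x, y) = (x − a·y, x − y), and let q : R × R → R/(1 − a)R be the map (x, y) ↦ [x − y]. Then q is surjective and its kernel is exactly the image of φ; consequently the cokernel of φ is isomorphic as an R-module to R/(1 − a)R. -/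
/-- The map `q(x,y) = [x - y] ∈ R/(1-a)R` is surjective with kernel the image of
`φ(x,y) = (x - a*y, x - y)`; hence `coker φ ≅ R/(1-a)R`. -/
theorem stmt_4 (R : Type*) [CommRing R] (a : R)
    (φ : (R × R) →ₗ[R] (R × R)) (hφ : ∀ x y : R, φ (x, y) = (x - a * y, x - y))
    (q : (R × R) →ₗ[R] (R ⧸ (Ideal.span {1 - a} : Ideal R)))
    (hq : ∀ x y : R, q (x, y) = Submodule.Quotient.mk (x - y)) :
    Function.Surjective q ∧ LinearMap.ker q = LinearMap.range φ ∧
      Nonempty (((R × R) ⧸ LinearMap.range φ) ≃ₗ[R]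
        (R ⧸ (Ideal.span {1 - a} : Ideal R))) := by
  have hsurj : Function.Surjective q := by
    intro z
    obtain ⟨x, rfl⟩ := Submodule.Quotient.mk_surjective _ z
    exact ⟨(x, 0), by rw [hq]; ring_nf⟩
  have hker : LinearMap.ker q = LinearMap.range φ := by
    ext ⟨u, v⟩
    simp only [LinearMap.mem_ker, LinearMap.mem_range]
    constructor
    · intro h
      rw [hq, Submodule.Quotient.mk_eq_zero, Ideal.mem_span_singleton] at h
      obtain ⟨r, hr⟩ := h
      refine ⟨(v + r, r), ?_⟩
      rw [hφ, Prod.mk.injEq]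
      exact ⟨by linear_combination -hr, by ring⟩
    · rintro ⟨⟨x, y⟩, hxy⟩
      rw [hφ] at hxy
      obtain ⟨h1, h2⟩ := Prod.mk.injEq .. ▸ hxy
      rw [hq, Submodule.Quotient.mk_eq_zero, Ideal.mem_span_singleton]
      exact ⟨y, by rw [mul_comm]; linear_combination -h1 + h2⟩
  refine ⟨hsurj, hker, ⟨?_⟩⟩
  exact (Submodule.quotEquivOfEq _ _ hker.symm).trans
    (q.quotKerEquivOfSurjective hsurj)
end

section
/- Let n be a positive integer, k an integer, and d = gcd(n, k), so d divides n. Consider the ring homomorphism π : ℤ[ZMod n] → ℤ[ZMod d] between integral group rings induced by the natural surjection ZMod n → ZMod d. Then π is surjective and its kernel is the ideal of ℤ[ZMod n] generated by the single element 1 − g^k, where g denotes the standard generator (the group-ring element corresponding to 1 ∈ ZMod n). -/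
/-!
Let `f : G →* H` be a surjective group homomorphism with a set-theoretic section `s`. Modulo the
ideal `I` spanned by the `g - 1` with `g ∈ ker f`, every `g ∈ G` is congruent to `s (f g)`, because
`g - s (f g) = s (f g) * (s (f g)⁻¹ * g - 1)`. Hence every `x ∈ R[G]` is congruent to
`mapDomain s (π x)`, which vanishes when `π x = 0`, so `ker π = I`. Since the `g` with `g - 1 ∈ I`
form a subgroup, `I` is already spanned by `g - 1` for `g` in any generating set of `ker f`.
The kernel of `ℤ/n → ℤ/d` is generated by `d`, and by Bézout `d = gcd(n, k)` and `k` generate the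
same subgroup of `ℤ/n`.
-/

open Function

namespace MonoidAlgebra

theorem mapDomain_mapDomain_of_rightInverse {R M N : Type*} [Semiring R] {f : M → N} {s : N → M}
    (hs : RightInverse s f) (y : R[N]) : mapDomain f (mapDomain s y) = y := by
  induction y using induction_linear with
  | zero => simp
  | add x y hx hy => rw [mapDomain_add, mapDomain_add, hx, hy]
  | single h r => rw [mapDomain_single, mapDomain_single, hs h]

theorem mapDomainRingHom_surjective {R M N : Type*} [Semiring R] [Monoid M] [Monoid N]
    {f : M →* N} (hf : Surjective f) : Surjective (mapDomainRingHom R f) :=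
  fun y ↦
    ⟨mapDomain (surjInv hf) y, mapDomain_mapDomain_of_rightInverse (rightInverse_surjInv hf) y⟩

section Ring

variable {R G H : Type*} [Ring R] [Group G] [Group H]

def subOneMemSubgroup (I : Ideal R[G]) : Subgroup G where
  carrier := {g | of R G g - 1 ∈ I}
  one_mem' := by simp only [Set.mem_ofPred_eq, map_one, sub_self, I.zero_mem]
  mul_mem' {g h} hg hh := by
    have : of R G (g * h) - 1 = of R G g * (of R G h - 1) + (of R G g - 1) := by
      rw [map_mul]; noncomm_ring
    rw [Set.mem_ofPred_eq, this]
    exact I.add_mem (I.mul_mem_left _ hh) hg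
  inv_mem' {g} hg := by
    have : of R G g⁻¹ - 1 = -(of R G g⁻¹ * (of R G g - 1)) := by
      rw [mul_sub, ← map_mul, inv_mul_cancel, map_one, mul_one, neg_sub]
    rw [Set.mem_ofPred_eq, this]
    exact I.neg_mem (I.mul_mem_left _ hg)

theorem span_of_sub_one_closure (S : Set G) :
    Ideal.span ((fun g ↦ of R G g - 1) '' Subgroup.closure S) =
      Ideal.span ((fun g ↦ of R G g - 1) '' S) := by
  refine le_antisymm (Ideal.span_le.2 ?_) (Ideal.span_mono (Set.image_mono Subgroup.subset_closure))
  rintro _ ⟨g, hg, rfl⟩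
  have hS : Subgroup.closure S ≤ subOneMemSubgroup (Ideal.span ((fun g ↦ of R G g - 1) '' S)) :=
    Subgroup.closure_le _ |>.2 fun s hs ↦ Ideal.subset_span ⟨s, hs, rfl⟩
  exact hS hg

theorem sub_mapDomain_mem_span_ker {f : G →* H} {s : H → G} (hs : RightInverse s f) (x : R[G]) :
    x - mapDomain s (mapDomainRingHom R f x) ∈ Ideal.span ((fun g ↦ of R G g - 1) '' f.ker) := by
  induction x using induction_linear with
  | zero => simp
  | add x y hx hy =>
    rw [map_add, mapDomain_add, add_sub_add_comm]
    exact Ideal.add_mem _ hx hy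
  | single g r =>
    set g' := s (f g)
    have hker : g'⁻¹ * g ∈ f.ker := by simp [g', hs (f g)]
    have : single g r - single g' r = single g' r * (of R G (g'⁻¹ * g) - 1) := by
      simp [mul_sub, single_mul_single]
    simp only [mapDomainRingHom_apply, mapDomain_single]
    rw [this]
    exact Ideal.mul_mem_left _ _ (Ideal.subset_span ⟨_, hker, rfl⟩)

theorem ker_mapDomainRingHom {f : G →* H} (hf : Surjective f) :
    RingHom.ker (mapDomainRingHom R f) = Ideal.span ((fun g ↦ of R G g - 1) '' f.ker) := by
  refine le_antisymm (fun x hx ↦ ?_) (Ideal.span_le.2 ?_)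
  · simpa [RingHom.mem_ker.1 hx] using sub_mapDomain_mem_span_ker (rightInverse_surjInv hf) x
  · rintro _ ⟨g, hg, rfl⟩
    rw [SetLike.mem_coe, RingHom.mem_ker, map_sub, map_one, mapDomainRingHom_apply, of_apply,
      mapDomain_single, (MonoidHom.mem_ker).1 hg, ← one_def, sub_self]

end Ring

end MonoidAlgebra

namespace ZMod

theorem ker_castHom {n d : ℕ} (hd : d ∣ n) :
    (castHom hd (ZMod d)).toAddMonoidHom.ker = AddSubgroup.zmultiples (d : ZMod n) := by
  ext x
  obtain ⟨m, rfl⟩ := intCast_surjective x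
  rw [AddMonoidHom.mem_ker, RingHom.toAddMonoidHom_eq_coe, AddMonoidHom.coe_coe, map_intCast,
    intCast_zmod_eq_zero_iff_dvd, AddSubgroup.mem_zmultiples_iff]
  constructor
  · rintro ⟨j, rfl⟩
    exact ⟨j, by push_cast; rw [zsmul_eq_mul, mul_comm]⟩
  · rintro ⟨j, hj⟩
    rw [zsmul_eq_mul, ← Int.cast_natCast, ← Int.cast_mul, intCast_eq_intCast_iff_dvd_sub] at hj
    simpa using Int.dvd_add ((Int.natCast_dvd_natCast.2 hd).trans hj) (dvd_mul_left _ j)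

theorem zmultiples_intCast_eq_gcd (n : ℕ) (k : ℤ) :
    AddSubgroup.zmultiples (k : ZMod n) = AddSubgroup.zmultiples ((Int.gcd n k : ℕ) : ZMod n) := by
  refine le_antisymm (AddSubgroup.zmultiples_le.2 ?_) (AddSubgroup.zmultiples_le.2 ?_)
  · obtain ⟨j, hj⟩ := Int.gcd_dvd_right (n : ℤ) k
    refine AddSubgroup.mem_zmultiples_iff.2 ⟨j, ?_⟩
    rw [zsmul_eq_mul, mul_comm]
    exact_mod_cast congrArg (Int.cast : ℤ → ZMod n) hj.symm
  · have bezout := congrArg (Int.cast : ℤ → ZMod n) (Int.gcd_eq_gcd_ab n k)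
    push_cast at bezout
    exact AddSubgroup.mem_zmultiples_iff.2 ⟨Int.gcdB n k, by simp [bezout, zsmul_eq_mul, mul_comm]⟩

end ZMod

theorem stmt_8_general (n : ℕ) (k : ℤ) :
    Function.Surjective
      (MonoidAlgebra.mapDomainRingHom ℤ
        (AddMonoidHom.toMultiplicative
          (ZMod.castHom
            (Int.natCast_dvd_natCast.mp (Int.gcd_dvd_left (a := (n : ℤ)) (b := k)))
            (ZMod (Int.gcd (n : ℤ) k))).toAddMonoidHom)) ∧
    RingHom.ker
      (MonoidAlgebra.mapDomainRingHom ℤ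
        (AddMonoidHom.toMultiplicative
          (ZMod.castHom
            (Int.natCast_dvd_natCast.mp (Int.gcd_dvd_left (a := (n : ℤ)) (b := k)))
            (ZMod (Int.gcd (n : ℤ) k))).toAddMonoidHom))
      = Ideal.span
          {1 - MonoidAlgebra.of ℤ (Multiplicative (ZMod n))
              (Multiplicative.ofAdd ((k : ZMod n)))} := by
  have hsurj := ZMod.castHom_surjective
    (Int.natCast_dvd_natCast.mp (Int.gcd_dvd_left (a := (n : ℤ)) (b := k)))
  refine ⟨MonoidAlgebra.mapDomainRingHom_surjective hsurj, ?_⟩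
  rw [MonoidAlgebra.ker_mapDomainRingHom hsurj, MonoidHom.coe_toMultiplicative_ker,
    ZMod.ker_castHom, ← ZMod.zmultiples_intCast_eq_gcd]
  change Ideal.span (_ '' (Subgroup.zpowers (Multiplicative.ofAdd (k : ZMod n)) :
    Set (Multiplicative (ZMod n)))) = _
  rw [Subgroup.zpowers_eq_closure, MonoidAlgebra.span_of_sub_one_closure, Set.image_singleton,
    ← Ideal.span_singleton_neg, neg_sub]

/-- The ring homomorphism `ℤ[ZMod n] → ℤ[ZMod d]` (with `d = gcd n k`) induced by
reduction mod `d` is surjective with kernel the ideal generated by `1 - g^k`. -/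
theorem stmt_8 (n : ℕ) (hn : 0 < n) (k : ℤ) :
    Function.Surjective
      (MonoidAlgebra.mapDomainRingHom ℤ
        (AddMonoidHom.toMultiplicative
          (ZMod.castHom
            (Int.natCast_dvd_natCast.mp (Int.gcd_dvd_left (a := (n : ℤ)) (b := k)))
            (ZMod (Int.gcd (n : ℤ) k))).toAddMonoidHom)) ∧
    RingHom.ker
      (MonoidAlgebra.mapDomainRingHom ℤ
        (AddMonoidHom.toMultiplicative
          (ZMod.castHom
            (Int.natCast_dvd_natCast.mp (Int.gcd_dvd_left (a := (n : ℤ)) (b := k)))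
            (ZMod (Int.gcd (n : ℤ) k))).toAddMonoidHom))
      = Ideal.span
          {1 - MonoidAlgebra.of ℤ (Multiplicative (ZMod n))
              (Multiplicative.ofAdd ((k : ZMod n)))} :=
  stmt_8_general n k
end

section
/- Let n be a positive integer, k an integer, and d = gcd(n, k). In the group ring R = ℤ[ZMod n] with a = g^k, the quotient R / (1 − a)R is a free abelian group of rank d; in particular it is torsion-free. -/
set_option maxHeartbeats 1000000

open MonoidAlgebra

variable {A : Type*} [AddCommGroup A] (c : A)

private theorem aux_equiv :
    Nonempty ((MonoidAlgebra ℤ (Multiplicative A) ⧸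
        Ideal.span {1 - MonoidAlgebra.of ℤ (Multiplicative A) (Multiplicative.ofAdd c)})
      ≃ₗ[ℤ] MonoidAlgebra ℤ (Multiplicative (A ⧸ AddSubgroup.zmultiples c))) := by
  classical
  set H := AddSubgroup.zmultiples c with hH
  set I : Ideal (MonoidAlgebra ℤ (Multiplicative A)) :=
    Ideal.span {1 - MonoidAlgebra.of ℤ (Multiplicative A) (Multiplicative.ofAdd c)} with hI
  set φ : Multiplicative A →* Multiplicative (A ⧸ H) :=
    AddMonoidHom.toMultiplicative (QuotientAddGroup.mk' H) with hφ
  set F : MonoidAlgebra ℤ (Multiplicative A) →+* MonoidAlgebra ℤ (Multiplicative (A ⧸ H)) :=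
    MonoidAlgebra.mapDomainRingHom ℤ φ with hF
  have hFof : ∀ a : A, F (MonoidAlgebra.of ℤ (Multiplicative A) (Multiplicative.ofAdd a)) =
      MonoidAlgebra.of ℤ (Multiplicative (A ⧸ H))
        (Multiplicative.ofAdd (QuotientAddGroup.mk a)) := by
    intro a
    show MonoidAlgebra.mapDomain φ (MonoidAlgebra.single _ (1:ℤ)) = _
    rw [MonoidAlgebra.mapDomain_single]
    rfl
  have hmemI : (1 - MonoidAlgebra.of ℤ (Multiplicative A) (Multiplicative.ofAdd c)) ∈ I :=
    Ideal.subset_span rfl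
  have hc0 : (QuotientAddGroup.mk c : A ⧸ H) = 0 := by
    rw [QuotientAddGroup.eq_zero_iff]
    exact AddSubgroup.mem_zmultiples c
  have hker : ∀ r ∈ I, F r = 0 := by
    have hle : I ≤ RingHom.ker F := by
      rw [hI, Ideal.span_le]
      intro y hy
      rcases hy with rfl
      simp only [SetLike.mem_coe, RingHom.mem_ker, map_sub, map_one, hFof, hc0]
      rw [sub_eq_zero]
      rfl
    exact fun r hr => RingHom.mem_ker.1 (hle hr)
  set mkI := Ideal.Quotient.mk I with hmkI
  have hu : mkI (of ℤ (Multiplicative A) (Multiplicative.ofAdd c)) = 1 := by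
    have h := Ideal.Quotient.eq_zero_iff_mem.2 hmemI
    rw [hmkI] at *
    rw [map_sub, map_one, sub_eq_zero] at h
    exact h.symm
  have hof0 : of ℤ (Multiplicative A) (Multiplicative.ofAdd (0 : A)) = 1 := by
    rfl
  have honeN : ∀ m : ℕ, mkI (of ℤ (Multiplicative A) (Multiplicative.ofAdd (m • c))) = 1 := by
    intro m
    induction m with
    | zero => rw [zero_nsmul, hof0, map_one]
    | succ m ih =>
      have h : Multiplicative.ofAdd ((m+1) • c)
          = Multiplicative.ofAdd (m • c) * Multiplicative.ofAdd c := by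
        rw [← ofAdd_add, succ_nsmul]
      rw [h, map_mul, map_mul, ih, hu, one_mul]
  have honeZ : ∀ m : ℤ, mkI (of ℤ (Multiplicative A) (Multiplicative.ofAdd (m • c))) = 1 := by
    intro m
    rcases Int.eq_nat_or_neg m with ⟨m', rfl | rfl⟩
    · rw [natCast_zsmul]; exact honeN m'
    · have h1 := honeN m'
      have h2 : (-(m' : ℤ)) • c + (m' : ℕ) • c = 0 := by
        rw [neg_zsmul, natCast_zsmul, neg_add_cancel]
      have h3 : mkI (of ℤ (Multiplicative A) (Multiplicative.ofAdd ((-(m' : ℤ)) • c))) *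
          mkI (of ℤ (Multiplicative A) (Multiplicative.ofAdd (((m' : ℕ) : ℕ) • c))) = 1 := by
        rw [← map_mul, ← map_mul, ← ofAdd_add, h2, hof0, map_one]
      rwa [h1, mul_one] at h3
  have key : ∀ a b : A, a - b ∈ H →
      mkI (of ℤ (Multiplicative A) (Multiplicative.ofAdd a))
        = mkI (of ℤ (Multiplicative A) (Multiplicative.ofAdd b)) := by
    intro a b hab
    obtain ⟨m, hm⟩ := AddSubgroup.mem_zmultiples_iff.1 hab
    have ha : a = b + m • c := by rw [hm]; abel
    have h4 : Multiplicative.ofAdd a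
        = Multiplicative.ofAdd b * Multiplicative.ofAdd (m • c) := by
      rw [← ofAdd_add, ha]
    rw [h4, map_mul, map_mul, honeZ, mul_one]
  set s : A ⧸ H → A := Quotient.out with hs
  have hsec : ∀ q : A ⧸ H, (QuotientAddGroup.mk (s q) : A ⧸ H) = q := fun q => Quotient.out_eq q
  have hkey2 : ∀ a : A,
      mkI (of ℤ (Multiplicative A) (Multiplicative.ofAdd (s (QuotientAddGroup.mk a))))
        = mkI (of ℤ (Multiplicative A) (Multiplicative.ofAdd a)) := by
    intro a
    apply key
    have h5 : (QuotientAddGroup.mk (s (QuotientAddGroup.mk a)) : A ⧸ H)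
        = QuotientAddGroup.mk a := hsec _
    have h6 := (QuotientAddGroup.eq).1 h5
    have h7 := neg_mem h6
    rwa [neg_add_rev, neg_neg, add_comm, ← sub_eq_add_neg] at h7
  set Fbar : (MonoidAlgebra ℤ (Multiplicative A) ⧸ I) →+* MonoidAlgebra ℤ (Multiplicative (A ⧸ H)) :=
    Ideal.Quotient.lift I F hker with hFbar
  set Flin : (MonoidAlgebra ℤ (Multiplicative A) ⧸ I) →ₗ[ℤ] MonoidAlgebra ℤ (Multiplicative (A ⧸ H)) :=
    Fbar.toAddMonoidHom.toIntLinearMap with hFlin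
  set ψ : MonoidAlgebra ℤ (Multiplicative (A ⧸ H)) →ₗ[ℤ] (MonoidAlgebra ℤ (Multiplicative A) ⧸ I) :=
    Finsupp.lsum ℤ (fun q => LinearMap.toSpanSingleton ℤ _
      (mkI (of ℤ (Multiplicative A) (Multiplicative.ofAdd (s (Multiplicative.toAdd q)))))) ∘ₗ
      (MonoidAlgebra.coeffLinearEquiv ℤ).toLinearMap with hψ
  have hψs : ∀ (q : Multiplicative (A ⧸ H)) (b : ℤ), ψ (MonoidAlgebra.single q b)
      = b • mkI (of ℤ (Multiplicative A) (Multiplicative.ofAdd (s (Multiplicative.toAdd q)))) := by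
    intro q b
    rw [hψ, LinearMap.comp_apply]
    erw [Finsupp.lsum_single]
    rfl
  have h1 : Flin ∘ₗ ψ = LinearMap.id := by
    refine LinearMap.toAddMonoidHom_injective (MonoidAlgebra.addMonoidHom_ext fun q b => ?_)
    show (Flin ∘ₗ ψ) (MonoidAlgebra.single q b) = MonoidAlgebra.single q b
    rw [LinearMap.comp_apply]
    have e2 : Flin (mkI (of ℤ (Multiplicative A)
        (Multiplicative.ofAdd (s (Multiplicative.toAdd q)))))
        = of ℤ (Multiplicative (A ⧸ H)) q := by
      show Fbar (Ideal.Quotient.mk I _) = _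
      rw [hFbar, Ideal.Quotient.lift_mk, hFof, hsec]
      rfl
    erw [hψs]
    rw [map_smul, e2]
    show b • MonoidAlgebra.single q (1:ℤ) = MonoidAlgebra.single q b
    rw [MonoidAlgebra.smul_single', mul_one]
  set mklin : MonoidAlgebra ℤ (Multiplicative A) →ₗ[ℤ] (MonoidAlgebra ℤ (Multiplicative A) ⧸ I) :=
    mkI.toAddMonoidHom.toIntLinearMap with hmklin
  have h2' : ψ ∘ₗ (Flin ∘ₗ mklin) = mklin := by
    refine LinearMap.toAddMonoidHom_injective (MonoidAlgebra.addMonoidHom_ext fun g b => ?_)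
    show (ψ ∘ₗ (Flin ∘ₗ mklin)) (MonoidAlgebra.single g b) = mklin (MonoidAlgebra.single g b)
    have eF : Flin (mklin (MonoidAlgebra.single g b)) = MonoidAlgebra.single (φ g) b := by
      show Fbar (Ideal.Quotient.mk I _) = _
      rw [hFbar, Ideal.Quotient.lift_mk, hF]
      exact MonoidAlgebra.mapDomain_single
    rw [LinearMap.comp_apply, LinearMap.comp_apply]
    erw [eF, hψs]
    have hφg : Multiplicative.toAdd (φ g) = QuotientAddGroup.mk (Multiplicative.toAdd g) := rfl
    rw [hφg, hkey2]
    have : MonoidAlgebra.single g b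
        = b • MonoidAlgebra.single g (1:ℤ) := by
      rw [MonoidAlgebra.smul_single', mul_one]
    show _ = mkI (MonoidAlgebra.single g b)
    rw [this, map_zsmul]
    rfl
  have h2 : ψ ∘ₗ Flin = LinearMap.id := by
    refine LinearMap.ext fun z => ?_
    obtain ⟨r, rfl⟩ := Ideal.Quotient.mk_surjective z
    have h := LinearMap.congr_fun h2' r
    exact h
  exact ⟨LinearEquiv.ofLinear Flin ψ h1 h2⟩

/-- In `R = ℤ[ZMod n]` with `a = g^k`, the quotient `R/(1-a)R` is a free abelian
group of rank `gcd n k`; in particular it is torsion-free. -/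
theorem stmt_10 (n : ℕ) (hn : 0 < n) (k : ℤ) :
    Module.Free ℤ (MonoidAlgebra ℤ (Multiplicative (ZMod n)) ⧸
      Ideal.span {1 - MonoidAlgebra.of ℤ (Multiplicative (ZMod n))
        (Multiplicative.ofAdd ((k : ZMod n)))}) ∧
    Module.finrank ℤ (MonoidAlgebra ℤ (Multiplicative (ZMod n)) ⧸
      Ideal.span {1 - MonoidAlgebra.of ℤ (Multiplicative (ZMod n))
        (Multiplicative.ofAdd ((k : ZMod n)))})
      = Int.gcd (n : ℤ) k ∧
    NoZeroSMulDivisors ℤ (MonoidAlgebra ℤ (Multiplicative (ZMod n)) ⧸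
      Ideal.span {1 - MonoidAlgebra.of ℤ (Multiplicative (ZMod n))
        (Multiplicative.ofAdd ((k : ZMod n)))}) := by
  haveI : NeZero n := ⟨hn.ne'⟩
  obtain ⟨e⟩ := aux_equiv ((k : ZMod n))
  set c : ZMod n := (k : ZMod n) with hc
  haveI : Finite (ZMod n ⧸ AddSubgroup.zmultiples c) := Quotient.finite _
  haveI : Fintype (Multiplicative (ZMod n ⧸ AddSubgroup.zmultiples c)) := Fintype.ofFinite _
  -- the cardinality computation
  have hcard : Nat.card (ZMod n ⧸ AddSubgroup.zmultiples c) = Int.gcd (n : ℤ) k := by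
    have h1 : Nat.card (ZMod n) = Nat.card (ZMod n ⧸ AddSubgroup.zmultiples c) *
        Nat.card (AddSubgroup.zmultiples c) :=
      AddSubgroup.card_eq_card_quotient_mul_card_addSubgroup _
    rw [Nat.card_zmod, Nat.card_zmultiples] at h1
    have hg : Int.gcd (n : ℤ) k = n.gcd k.natAbs := by
      unfold Int.gcd
      rw [Int.natAbs_natCast]
    have h3 : addOrderOf c = n / Int.gcd (n : ℤ) k := by
      rcases Int.natAbs_eq k with hk | hk
      · have hck : c = ((k.natAbs : ℕ) : ZMod n) := by
          rw [hc]
          have h' := congrArg (fun t : ℤ => (t : ZMod n)) hk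
          simp only [Int.cast_natCast] at h'
          exact h'
        rw [hck, ZMod.addOrderOf_coe _ hn.ne', hg]
      · have hck : c = -((k.natAbs : ℕ) : ZMod n) := by
          rw [hc]
          have h' := congrArg (fun t : ℤ => (t : ZMod n)) hk
          simp only [Int.cast_neg, Int.cast_natCast] at h'
          exact h'
        rw [hck, addOrderOf_neg, ZMod.addOrderOf_coe _ hn.ne', hg]
    rw [h3] at h1
    have hd0 : 0 < Int.gcd (n : ℤ) k := Int.gcd_pos_iff.2 (Or.inl (by exact_mod_cast hn.ne'))
    have hdn : Int.gcd (n : ℤ) k ∣ n := by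
      rw [hg]; exact Nat.gcd_dvd_left _ _
    have h5 : 0 < n / Int.gcd (n : ℤ) k := Nat.div_pos (Nat.le_of_dvd hn hdn) hd0
    have h4 : n = Int.gcd (n : ℤ) k * (n / Int.gcd (n : ℤ) k) := (Nat.mul_div_cancel' hdn).symm
    apply Nat.eq_of_mul_eq_mul_right h5
    rw [← h1, ← h4]
  haveI hfree : Module.Free ℤ (MonoidAlgebra ℤ (Multiplicative (ZMod n ⧸ AddSubgroup.zmultiples c))) :=
    Module.Free.of_equiv (MonoidAlgebra.coeffLinearEquiv ℤ).symm
  haveI hnz : NoZeroSMulDivisors ℤ (MonoidAlgebra ℤ (Multiplicative (ZMod n ⧸ AddSubgroup.zmultiples c))) :=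
    Function.Injective.noZeroSMulDivisors _ (MonoidAlgebra.coeffLinearEquiv ℤ).injective
      (map_zero _) (map_smul _)
  refine ⟨Module.Free.of_equiv e.symm, ?_, ?_⟩
  · rw [e.finrank_eq]
    have hfr : Module.finrank ℤ (MonoidAlgebra ℤ (Multiplicative (ZMod n ⧸ AddSubgroup.zmultiples c)))
        = Fintype.card (Multiplicative (ZMod n ⧸ AddSubgroup.zmultiples c)) :=
      (MonoidAlgebra.coeffLinearEquiv ℤ).finrank_eq.trans (Module.finrank_finsupp_self ℤ)
    rw [hfr]
    show Fintype.card (Multiplicative (ZMod n ⧸ AddSubgroup.zmultiples c)) = _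
    rw [← Nat.card_eq_fintype_card, Nat.card_congr Multiplicative.toAdd, hcard]
  · refine ⟨fun {a x} h => ?_⟩
    have h' : a • e x = 0 := by
      rw [← LinearEquiv.map_smul e, h, LinearEquiv.map_zero]
    rcases smul_eq_zero.1 h' with ha | hx
    · exact Or.inl ha
    · refine Or.inr (e.injective ?_)
      rw [hx, LinearEquiv.map_zero]
end

section
/- Let n be a positive integer, k an integer, d = gcd(n, k), and let π : ℤ[ZMod n] → ℤ[ZMod d] be the ring homomorphism induced by reduction modulo d. Let a = g^k ∈ ℤ[ZMod n]. Then π restricts to an injective group homomorphism on the fixed subgroup {p : a·p = p}, and its image is exactly (n/d) · ℤ[ZMod d], the subgroup of elements all of whose coefficients are divisible by n/d. -/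
private lemma mapDomain_apply_fin {G H : Type*} [Fintype G] [DecidableEq H]
    (f : G → H) (p : G →₀ ℤ) (y : H) :
    Finsupp.mapDomain f p y = ∑ x : G, if f x = y then p x else 0 := by
  classical
  rw [Finsupp.mapDomain, Finsupp.sum_apply, Finsupp.sum]
  trans ∑ x ∈ p.support, if f x = y then p x else 0
  · exact Finset.sum_congr rfl fun x _ => Finsupp.single_apply
  · exact Finset.sum_subset (Finset.subset_univ _)
      (fun x _ hx => by simp [Finsupp.notMem_support_iff.mp hx])

private lemma card_fiber {G H : Type*} [AddCommGroup G] [AddCommGroup H] [Fintype G] [Fintype H]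
    [DecidableEq H] (f : G → H) (hsub : ∀ a b, f (a - b) = f a - f b)
    (hadd : ∀ a b, f (a + b) = f a + f b) (hf : Function.Surjective f) (y : H) :
    (Finset.univ.filter (fun x => f x = y)).card = Fintype.card G / Fintype.card H := by
  classical
  have key : ∀ z : H, (Finset.univ.filter (fun x => f x = z)).card
      = (Finset.univ.filter (fun x => f x = (0:H))).card := by
    intro z
    obtain ⟨x₁, hx₁⟩ := hf z
    apply Finset.card_bij (fun x _ => x - x₁)
    · intro a ha
      simp only [Finset.mem_filter, Finset.mem_univ, true_and] at ha ⊢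
      simp [hsub, ha, hx₁]
    · intro a _ b _ h
      exact sub_left_injective h
    · intro b hb
      simp only [Finset.mem_filter, Finset.mem_univ, true_and] at hb
      exact ⟨b + x₁, by simp [hadd, hb, hx₁], by abel⟩
  have total : ∑ z : H, (Finset.univ.filter (fun x => f x = z)).card = Fintype.card G := by
    rw [← Finset.card_univ,
      Finset.card_eq_sum_card_fiberwise (fun x _ => Finset.mem_univ (f x))]
  rw [key y]
  have htot2 : Fintype.card H * (Finset.univ.filter (fun x => f x = (0:H))).card
      = Fintype.card G := by
    rw [← total, Finset.sum_congr rfl (fun z _ => key z), Finset.sum_const, Finset.card_univ,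
      smul_eq_mul]
  rw [← htot2, Nat.mul_div_cancel_left _ Fintype.card_pos]

/-- With `d = gcd n k`, the reduction map `π : ℤ[ZMod n] → ℤ[ZMod d]` is injective on
the fixed subgroup `{p | g^k·p = p}` and its image there is exactly the set of
elements all of whose coefficients are divisible by `n/d`. -/
theorem stmt_13 (n : ℕ) (hn : 0 < n) (k : ℤ) :
    Set.InjOn
      (MonoidAlgebra.mapDomainRingHom ℤ
        (AddMonoidHom.toMultiplicative
          (ZMod.castHom
            (Int.natCast_dvd_natCast.mp (Int.gcd_dvd_left (a := (n : ℤ)) (b := k)))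
            (ZMod (Int.gcd (n : ℤ) k))).toAddMonoidHom))
      {p : MonoidAlgebra ℤ (Multiplicative (ZMod n)) |
        MonoidAlgebra.of ℤ (Multiplicative (ZMod n))
            (Multiplicative.ofAdd ((k : ZMod n))) * p = p} ∧
    (MonoidAlgebra.mapDomainRingHom ℤ
        (AddMonoidHom.toMultiplicative
          (ZMod.castHom
            (Int.natCast_dvd_natCast.mp (Int.gcd_dvd_left (a := (n : ℤ)) (b := k)))
            (ZMod (Int.gcd (n : ℤ) k))).toAddMonoidHom)) ''
      {p : MonoidAlgebra ℤ (Multiplicative (ZMod n)) |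
        MonoidAlgebra.of ℤ (Multiplicative (ZMod n))
            (Multiplicative.ofAdd ((k : ZMod n))) * p = p}
      = {q : MonoidAlgebra ℤ (Multiplicative (ZMod (Int.gcd (n : ℤ) k))) |
          ∀ x, ((n / Int.gcd (n : ℤ) k : ℕ) : ℤ) ∣ q.coeff x} := by
  classical
  haveI : NeZero n := ⟨hn.ne'⟩
  have hdn : Int.gcd (n : ℤ) k ∣ n := Int.natCast_dvd_natCast.mp (Int.gcd_dvd_left _ _)
  have hd0 : Int.gcd (n : ℤ) k ≠ 0 := by
    intro h
    exact hn.ne' (Nat.eq_zero_of_zero_dvd (h ▸ hdn))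
  haveI : NeZero (Int.gcd (n : ℤ) k) := ⟨hd0⟩
  set d := Int.gcd (n : ℤ) k with hd
  set f : ZMod n →+* ZMod d := ZMod.castHom hdn (ZMod d) with hfdef
  set π := (MonoidAlgebra.mapDomainRingHom ℤ
        (AddMonoidHom.toMultiplicative
          (ZMod.castHom
            (Int.natCast_dvd_natCast.mp (Int.gcd_dvd_left (a := (n : ℤ)) (b := k)))
            (ZMod d)).toAddMonoidHom)) with hπdef
  -- basic facts
  have hfk : f ((k : ZMod n)) = 0 := by
    have : ((k : ℤ) : ZMod n) = ((k : ℤ) : ZMod n) := rfl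
    rw [show ((k : ZMod n)) = (((k : ℤ) : ZMod n)) from rfl, map_intCast,
      ZMod.intCast_zmod_eq_zero_iff_dvd]
    exact_mod_cast Int.gcd_dvd_right (a := (n : ℤ)) (b := k)
  have hfval : ∀ z : ZMod d, f ((z.val : ZMod n)) = z := by
    intro z
    rw [map_natCast, ZMod.natCast_zmod_val]
  have hfsurj : Function.Surjective f := fun z => ⟨(z.val : ZMod n), hfval z⟩
  -- π as mapDomain
  have hπ : ∀ p : MonoidAlgebra ℤ (Multiplicative (ZMod n)),
      (π p).coeff = Finsupp.mapDomain
        (fun x : Multiplicative (ZMod n) => Multiplicative.ofAdd (f x.toAdd)) p.coeff :=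
    fun p => rfl
  -- fixed set characterization
  have hfixA : ∀ p : MonoidAlgebra ℤ (Multiplicative (ZMod n)),
      (MonoidAlgebra.of ℤ (Multiplicative (ZMod n))
            (Multiplicative.ofAdd ((k : ZMod n))) * p = p) ↔
        ∀ y : ZMod n, p.coeff (Multiplicative.ofAdd (-(k : ZMod n) + y))
          = p.coeff (Multiplicative.ofAdd y) := by
    intro p
    constructor
    · intro h y
      conv_rhs => rw [← h]
      rw [MonoidAlgebra.of_apply, MonoidAlgebra.single_mul_apply, one_mul]
      rfl
    · intro h
      ext y
      rw [MonoidAlgebra.of_apply, MonoidAlgebra.single_mul_apply, one_mul]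
      exact h y.toAdd
  -- translation invariance
  have hstep : ∀ p : MonoidAlgebra ℤ (Multiplicative (ZMod n)),
      (∀ y : ZMod n, p.coeff (Multiplicative.ofAdd (-(k : ZMod n) + y))
          = p.coeff (Multiplicative.ofAdd y)) →
      ∀ (t : ℤ) (y : ZMod n),
        p.coeff (Multiplicative.ofAdd (y + ((t * k : ℤ) : ZMod n)))
          = p.coeff (Multiplicative.ofAdd y) := by
    intro p hp t
    induction t using Int.induction_on with
    | zero => simp
    | succ t ih =>
      intro y
      have h1 := hp (y + (((t + 1) * k : ℤ) : ZMod n))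
      have harg : -(k : ZMod n) + (y + (((t + 1) * k : ℤ) : ZMod n))
          = y + ((t * k : ℤ) : ZMod n) := by push_cast; ring
      rw [harg] at h1
      rw [← h1, ih y]
    | pred t ih =>
      intro y
      have h1 := hp (y + (((-t) * k : ℤ) : ZMod n))
      have harg : -(k : ZMod n) + (y + (((-t) * k : ℤ) : ZMod n))
          = y + (((-t - 1) * k : ℤ) : ZMod n) := by push_cast; ring
      rw [harg] at h1
      rw [h1, ih y]
  -- kernel description
  have hker : ∀ x : ZMod n, f x = 0 → ∃ t : ℤ, x = ((t * k : ℤ) : ZMod n) := by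
    intro x hx
    have hx' : ((x.val : ℕ) : ZMod d) = 0 := by
      rw [← map_natCast f, ZMod.natCast_zmod_val, hx]
    obtain ⟨s, hs⟩ := (ZMod.natCast_eq_zero_iff _ _).mp hx'
    refine ⟨Int.gcdB (n : ℤ) k * (s : ℤ), ?_⟩
    have hb := Int.gcd_eq_gcd_ab (n : ℤ) k
    have h1 : x = (((x.val : ℤ)) : ZMod n) := by
      rw [Int.cast_natCast, ZMod.natCast_zmod_val]
    have h2 : (x.val : ℤ) = ((n : ℤ) * Int.gcdA (n : ℤ) k + k * Int.gcdB (n : ℤ) k) * s := by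
      rw [← hb]; exact_mod_cast congrArg (Nat.cast : ℕ → ℤ) hs
    rw [h1, h2]
    push_cast [ZMod.natCast_self]
    ring
  -- constancy on fibers
  have hconst : ∀ p : MonoidAlgebra ℤ (Multiplicative (ZMod n)),
      (∀ y : ZMod n, p.coeff (Multiplicative.ofAdd (-(k : ZMod n) + y))
          = p.coeff (Multiplicative.ofAdd y)) →
      ∀ x y : ZMod n, f x = f y →
        p.coeff (Multiplicative.ofAdd x) = p.coeff (Multiplicative.ofAdd y) := by
    intro p hp x y hxy
    have h0 : f (x - y) = 0 := by rw [map_sub, hxy, sub_self]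
    obtain ⟨t, ht⟩ := hker _ h0
    have : x = y + ((t * k : ℤ) : ZMod n) := by rw [← ht]; ring
    rw [this, hstep p hp t y]
  -- value of π on fixed elements
  have hval : ∀ p : MonoidAlgebra ℤ (Multiplicative (ZMod n)),
      (∀ y : ZMod n, p.coeff (Multiplicative.ofAdd (-(k : ZMod n) + y))
          = p.coeff (Multiplicative.ofAdd y)) →
      ∀ z : ZMod d,
        (π p).coeff (Multiplicative.ofAdd z)
          = ((n / d : ℕ) : ℤ) * p.coeff (Multiplicative.ofAdd ((z.val : ZMod n))) := by
    intro p hp z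
    rw [hπ, mapDomain_apply_fin]
    have e1 : (∑ x : Multiplicative (ZMod n),
        if Multiplicative.ofAdd (f x.toAdd) = Multiplicative.ofAdd z then p.coeff x else 0)
        = ∑ y : ZMod n, if f y = z then p.coeff (Multiplicative.ofAdd ((z.val : ZMod n))) else 0 := by
      apply Fintype.sum_equiv Multiplicative.toAdd
      intro x
      by_cases hc : f x.toAdd = z
      · rw [if_pos (by exact_mod_cast congrArg Multiplicative.ofAdd hc), if_pos hc]
        exact hconst p hp x.toAdd (z.val : ZMod n) (by rw [hc, hfval])
      · rw [if_neg (fun hh => hc (by simpa using hh)), if_neg hc]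
    rw [e1, ← Finset.sum_filter, Finset.sum_const,
      card_fiber (fun x => f x) (by simp) (by simp) hfsurj z, ZMod.card, ZMod.card,
      nsmul_eq_mul]
  have hdivne : ((n / d : ℕ) : ℤ) ≠ 0 := by
    have h1 : n / d * d = n := Nat.div_mul_cancel hdn
    intro h0
    have : (n / d : ℕ) = 0 := by exact_mod_cast h0
    rw [this, zero_mul] at h1
    exact hn.ne' h1.symm
  constructor
  · -- injectivity
    intro p hp q hq h
    have hp' := (hfixA p).mp hp
    have hq' := (hfixA q).mp hq
    ext x
    have h1 : (π p).coeff (Multiplicative.ofAdd (f x.toAdd))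
        = (π q).coeff (Multiplicative.ofAdd (f x.toAdd)) := by rw [h]
    rw [hval p hp' (f x.toAdd), hval q hq' (f x.toAdd)] at h1
    have h2 := mul_left_cancel₀ hdivne h1
    have e3 : p.coeff x = p.coeff (Multiplicative.ofAdd (((f x.toAdd).val : ZMod n))) :=
      hconst p hp' x.toAdd ((f x.toAdd).val : ZMod n) (by rw [hfval])
    have e4 : q.coeff x = q.coeff (Multiplicative.ofAdd (((f x.toAdd).val : ZMod n))) :=
      hconst q hq' x.toAdd ((f x.toAdd).val : ZMod n) (by rw [hfval])
    rw [e3, h2, ← e4]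
  · -- image
    ext q
    simp only [Set.mem_image, Set.mem_setOf_eq]
    constructor
    · rintro ⟨p, hp, rfl⟩ x
      have hp' := (hfixA p).mp hp
      exact ⟨_, hval p hp' x.toAdd⟩
    · intro hq
      choose c hc using hq
      set p : MonoidAlgebra ℤ (Multiplicative (ZMod n)) :=
        MonoidAlgebra.ofCoeff (Finsupp.equivFunOnFinite.symm
          (fun x : Multiplicative (ZMod n) => c (Multiplicative.ofAdd (f x.toAdd)))) with hpdef
      have hpapp : ∀ x, p.coeff x = c (Multiplicative.ofAdd (f x.toAdd)) := fun x => rfl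
      have hp' : ∀ y : ZMod n, p.coeff (Multiplicative.ofAdd (-(k : ZMod n) + y))
          = p.coeff (Multiplicative.ofAdd y) := by
        intro y
        rw [hpapp, hpapp]
        show c (Multiplicative.ofAdd (f (-(k : ZMod n) + y)))
          = c (Multiplicative.ofAdd (f y))
        rw [map_add, map_neg, hfk, neg_zero, zero_add]
      refine ⟨p, (hfixA p).mpr hp', ?_⟩
      ext x
      rw [show (π p).coeff x = ((n / d : ℕ) : ℤ)
            * p.coeff (Multiplicative.ofAdd ((x.toAdd.val : ZMod n))) from hval p hp' x.toAdd,
        hpapp]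
      simp only [toAdd_ofAdd]
      rw [hfval x.toAdd, hc x, ofAdd_toAdd]
end

section
/- Let R be a commutative ring, a ∈ R, and j a positive integer, with Φ : R^j × R^j → R^j × R^j defined by Φ(p₁,…,p_j, q₁,…,q_j) = (p₁ − a·q₁, …, p_j − a·q_j, p₁ − q₂, p₂ − q₃, …, p_{j−1} − q_j, p_j − q₁). Define ψ : R^j × R^j → R/(1 − a^j)R by ψ(x₁,…,x_j, y₁,…,y_j) = [ (x₁ + a·x_j + a²·x_{j−1} + ⋯ + a^{j−1}·x₂) − (a·y_j + a²·y_{j−1} + ⋯ + a^j·y₁) ]. Then ψ is surjective and ker ψ = im Φ, so the cokernel of Φ is isomorphic to R/(1 − a^j)R. -/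
open Fin.NatCast

section StmtAux

variable {R : Type*} [CommRing R] {j : ℕ} [NeZero j]

/-- Recursive solution `p` to the system `p i = x i + a * p (i-1) - a * y (i-1)`. -/
private def stmtP (a : R) (x y : Fin j → R) (c : R) : ℕ → R
  | 0 => c
  | n + 1 => x (↑(n + 1)) + a * stmtP a x y c n - a * y ↑n

private lemma stmtP_tel (a : R) (x y : Fin j → R) (c : R) :
    ∀ n, n < j → a ^ (j - n) * stmtP a x y c n
      = a ^ j * c + ∑ k ∈ Finset.range n,
          (a ^ (j - 1 - k) * x ↑(k + 1) - a ^ (j - k) * y ↑k) := by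
  intro n
  induction n with
  | zero => intro _; simp [stmtP]
  | succ m ih =>
    intro h
    have hm : m < j := Nat.lt_of_succ_lt h
    rw [Finset.sum_range_succ, ← add_assoc, ← ih hm]
    show a ^ (j - (m + 1)) * (x (↑(m + 1)) + a * stmtP a x y c m - a * y ↑m) = _
    have h1 : j - m = (j - (m + 1)) + 1 := by omega
    have h2 : j - 1 - m = j - (m + 1) := by omega
    rw [h1, h2, pow_succ]
    ring

private lemma stmt_exp_eq (hj : 0 < j) (k : ℕ) (hk : k < j) :
    j - ((j - 1 % j + k) % j) = (j - k) % j + 1 := by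
  rcases Nat.lt_or_ge j 2 with h2 | h2
  · interval_cases j
    omega
  · have h1 : 1 % j = 1 := Nat.mod_eq_of_lt (by omega)
    rw [h1]
    rcases Nat.eq_zero_or_pos k with rfl | hk0
    · rw [Nat.add_zero, Nat.mod_eq_of_lt (by omega), Nat.sub_zero, Nat.mod_self]
      omega
    · have e1 : (j - 1 + k) % j = k - 1 := by
        have : j - 1 + k = j + (k - 1) := by omega
        rw [this, Nat.add_mod_left, Nat.mod_eq_of_lt (by omega)]
      have e2 : (j - k) % j = j - k := Nat.mod_eq_of_lt (by omega)
      rw [e1, e2]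
      omega

end StmtAux

/-- The map `ψ(x,y) = [(x₁ + a·x_j + ⋯ + a^{j-1}·x₂) - (a·y_j + ⋯ + a^j·y₁)]` into
`R/(1-a^j)R` is surjective with kernel the image of `Φ`; hence
`coker Φ ≅ R/(1-a^j)R`. -/
theorem stmt_15 (R : Type*) [CommRing R] (a : R) (j : ℕ) [NeZero j]
    (Φ : ((Fin j → R) × (Fin j → R)) →ₗ[R] ((Fin j → R) × (Fin j → R)))
    (hΦ : ∀ p q : Fin j → R,
      Φ (p, q) = (fun i => p i - a * q i, fun i => p i - q (i + 1)))
    (ψ : ((Fin j → R) × (Fin j → R)) →ₗ[R]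
      (R ⧸ (Ideal.span {1 - a ^ j} : Ideal R)))
    (hψ : ∀ x y : Fin j → R,
      ψ (x, y) = Submodule.Quotient.mk
        (∑ i : Fin j, a ^ ((j - (i : ℕ)) % j) * x i
          - ∑ i : Fin j, a ^ (j - (i : ℕ)) * y i)) :
    Function.Surjective ψ ∧ LinearMap.ker ψ = LinearMap.range Φ ∧
      Nonempty ((((Fin j → R) × (Fin j → R)) ⧸ LinearMap.range Φ) ≃ₗ[R]
        (R ⧸ (Ideal.span {1 - a ^ j} : Ideal R))) := by
  have hj : 0 < j := Nat.pos_of_ne_zero (NeZero.ne j)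
  -- value of powers on subtracted-one Fin index
  have hsub_val : ∀ k : Fin j, ((k - 1 : Fin j) : ℕ) = (j - 1 % j + (k : ℕ)) % j := by
    intro k
    rw [Fin.sub_def]
    simp [Fin.val_one']
  have hpow : ∀ k : Fin j, a ^ (j - ((k - 1 : Fin j) : ℕ)) = a ^ ((j - (k : ℕ)) % j) * a := by
    intro k
    rw [hsub_val k, stmt_exp_eq hj _ k.isLt, pow_succ]
  -- surjectivity
  have hsurj : Function.Surjective ψ := by
    intro z
    obtain ⟨r, rfl⟩ := Submodule.Quotient.mk_surjective _ z
    refine ⟨((fun i => if i = 0 then r else 0), 0), ?_⟩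
    rw [hψ]
    congr 1
    simp only [Pi.zero_apply, mul_zero, Finset.sum_const_zero, sub_zero, mul_ite]
    rw [Finset.sum_ite_eq' Finset.univ (0 : Fin j)
      (fun i => a ^ ((j - (i : ℕ)) % j) * r)]
    simp
  -- range Φ ⊆ ker ψ
  have hrange_le : LinearMap.range Φ ≤ LinearMap.ker ψ := by
    rintro _ ⟨⟨p, q⟩, rfl⟩
    rw [LinearMap.mem_ker, hΦ, hψ, Submodule.Quotient.mk_eq_zero,
      Ideal.mem_span_singleton]
    refine ⟨p 0, ?_⟩
    have hq : ∑ i : Fin j, a ^ (j - (i : ℕ)) * q (i + 1)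
        = ∑ i : Fin j, a ^ ((j - (i : ℕ)) % j) * a * q i := by
      refine (Fintype.sum_equiv (Equiv.subRight (1 : Fin j))
        (fun i => a ^ ((j - (i : ℕ)) % j) * a * q i)
        (fun i => a ^ (j - (i : ℕ)) * q (i + 1)) (fun i => ?_)).symm
      simp only [Equiv.subRight_apply]
      rw [← hpow i, sub_add_cancel]
    have hp : ∑ i : Fin j, (a ^ ((j - (i : ℕ)) % j) - a ^ (j - (i : ℕ))) * p i
        = (1 - a ^ j) * p 0 := by
      rw [Finset.sum_eq_single (0 : Fin j)]
      · simp
      · intro i _ hi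
        have hiv : 0 < (i : ℕ) := Nat.pos_of_ne_zero (fun h => hi (Fin.ext h))
        rw [Nat.mod_eq_of_lt (by omega), sub_self, zero_mul]
      · intro h; exact absurd (Finset.mem_univ _) h
    calc ∑ i : Fin j, a ^ ((j - (i : ℕ)) % j) * (p i - a * q i)
          - ∑ i : Fin j, a ^ (j - (i : ℕ)) * (p i - q (i + 1))
        = ∑ i : Fin j, (a ^ ((j - (i : ℕ)) % j) - a ^ (j - (i : ℕ))) * p i
          + (∑ i : Fin j, a ^ (j - (i : ℕ)) * q (i + 1)
            - ∑ i : Fin j, a ^ ((j - (i : ℕ)) % j) * a * q i) := by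
          rw [← Finset.sum_sub_distrib, ← Finset.sum_sub_distrib,
            ← Finset.sum_add_distrib]
          exact Finset.sum_congr rfl fun i _ => by ring
      _ = (1 - a ^ j) * p 0 := by rw [hq, sub_self, add_zero, hp]
  -- ker ψ ⊆ range Φ
  have hker_le : LinearMap.ker ψ ≤ LinearMap.range Φ := by
    rintro ⟨x, y⟩ hxy
    rw [LinearMap.mem_ker, hψ, Submodule.Quotient.mk_eq_zero,
      Ideal.mem_span_singleton] at hxy
    obtain ⟨c, hc⟩ := hxy
    set p : Fin j → R := fun i => stmtP a x y c (i : ℕ) with hpdef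
    set q : Fin j → R := fun i => p (i - 1) - y (i - 1) with hqdef
    -- recursion holds for nonzero indices
    have hrec : ∀ i : Fin j, p i = x i + a * p (i - 1) - a * y (i - 1) := by
      intro i
      rcases eq_or_ne i 0 with rfl | hi
      · -- consistency around the cycle
        have hm1 : ((0 : Fin j) - 1) = ((j - 1 : ℕ) : Fin j) := by
          apply Fin.ext
          rw [hsub_val 0, Fin.val_natCast]
          rcases Nat.lt_or_ge j 2 with h2 | h2
          · interval_cases j; simp
          · rw [Nat.mod_eq_of_lt (show 1 < j by omega), Fin.val_zero,
              Nat.add_zero, Nat.mod_eq_of_lt (by omega)]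
        have hm1v : (((0 : Fin j) - 1 : Fin j) : ℕ) = j - 1 := by
          rw [hm1, Fin.val_natCast, Nat.mod_eq_of_lt (by omega)]
        have htel := stmtP_tel a x y c (j - 1) (by omega)
        rw [show j - (j - 1) = 1 by omega, pow_one] at htel
        -- rewrite hc using range sums and peeling
        have hsplit : ∀ f : ℕ → R, ∑ k ∈ Finset.range j, f k
            = f 0 + ∑ k ∈ Finset.range (j - 1), f (k + 1) := by
          intro f
          conv_lhs => rw [show j = (j - 1) + 1 from by omega]
          rw [Finset.sum_range_succ', add_comm]
        have hsplit' : ∀ f : ℕ → R, ∑ k ∈ Finset.range j, f k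
            = (∑ k ∈ Finset.range (j - 1), f k) + f (j - 1) := by
          intro f
          conv_lhs => rw [show j = (j - 1) + 1 from by omega]
          rw [Finset.sum_range_succ]
        have hx : ∑ i : Fin j, a ^ ((j - (i : ℕ)) % j) * x i
            = x 0 + ∑ k ∈ Finset.range (j - 1), a ^ (j - 1 - k) * x ↑(k + 1) := by
          have h0 : ∑ i : Fin j, a ^ ((j - (i : ℕ)) % j) * x i
              = ∑ k ∈ Finset.range j, a ^ ((j - k) % j) * x ↑k := by
            rw [← Fin.sum_univ_eq_sum_range (fun k => a ^ ((j - k) % j) * x ↑k) j]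
            exact Finset.sum_congr rfl fun i _ => by rw [Fin.cast_val_eq_self]
          rw [h0, hsplit (fun k => a ^ ((j - k) % j) * x ↑k)]
          rw [Nat.sub_zero, Nat.mod_self, pow_zero, one_mul, Nat.cast_zero]
          congr 1
          refine Finset.sum_congr rfl fun k hk => ?_
          rw [Finset.mem_range] at hk
          rw [Nat.mod_eq_of_lt (by omega)]
          congr 2
          omega
        have hy : ∑ i : Fin j, a ^ (j - (i : ℕ)) * y i
            = (∑ k ∈ Finset.range (j - 1), a ^ (j - k) * y ↑k) + a * y ↑(j - 1) := by
          have h0 : ∑ i : Fin j, a ^ (j - (i : ℕ)) * y i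
              = ∑ k ∈ Finset.range j, a ^ (j - k) * y ↑k := by
            rw [← Fin.sum_univ_eq_sum_range (fun k => a ^ (j - k) * y ↑k) j]
            exact Finset.sum_congr rfl fun i _ => by rw [Fin.cast_val_eq_self]
          rw [h0, hsplit' (fun k => a ^ (j - k) * y ↑k),
            show j - (j - 1) = 1 from by omega, pow_one]
        rw [hx, hy] at hc
        rw [Finset.sum_sub_distrib] at htel
        show c = x 0 + a * stmtP a x y c (((0 : Fin j) - 1 : Fin j) : ℕ)
          - a * y ((0 : Fin j) - 1)
        rw [hm1v, hm1]
        linear_combination -hc - htel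
      · -- nonzero case: unfold the recursion
        obtain ⟨m, hmval⟩ : ∃ m, (i : ℕ) = m + 1 := by
          have : (i : ℕ) ≠ 0 := fun h => hi (Fin.ext h)
          exact ⟨(i : ℕ) - 1, by omega⟩
        have hmlt : m + 1 < j := hmval ▸ i.isLt
        have him : i = ((m + 1 : ℕ) : Fin j) := by
          rw [← hmval, Fin.cast_val_eq_self]
        have hi1 : i - 1 = ((m : ℕ) : Fin j) := by
          rw [him, Nat.cast_add, Nat.cast_one, add_sub_cancel_right]
        have hi1v : ((i - 1 : Fin j) : ℕ) = m := by
          rw [hi1, Fin.val_natCast, Nat.mod_eq_of_lt (by omega)]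
        show stmtP a x y c (i : ℕ) = x i + a * stmtP a x y c ((i - 1 : Fin j) : ℕ)
          - a * y (i - 1)
        rw [hmval, hi1v, hi1, him]
        rfl
    refine ⟨(p, q), ?_⟩
    rw [hΦ]
    refine Prod.ext ?_ ?_ <;> funext i
    · show p i - a * (p (i - 1) - y (i - 1)) = x i
      linear_combination hrec i
    · show p i - (p (i + 1 - 1) - y (i + 1 - 1)) = y i
      rw [add_sub_cancel_right]
      ring
  have hker : LinearMap.ker ψ = LinearMap.range Φ := le_antisymm hker_le hrange_le
  exact ⟨hsurj, hker, ⟨(Submodule.quotEquivOfEq _ _ hker.symm).trans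
    (ψ.quotKerEquivOfSurjective hsurj)⟩⟩
end

section
/- Let n, k be integers with n > 0, d = gcd(n, k), and let R = ℤ[ZMod n] with a = g^k. Consider the ℤ-linear map φ : R × R → R × R, φ(x, y) = (x − a·y, x − y). Then both the kernel of φ and the cokernel of φ are free abelian groups of rank d. -/
/-!
The kernel of `φ(x, y) = (x - a y, x - y)` is the diagonal copy of the fixed points of `a`, and
`(x, y) ↦ x - y` identifies its cokernel with `R ⧸ (1 - a)R`. In the group ring `R[G]` of a finite
abelian group, `g f = f` says exactly that the coefficients of `f` are constant on the cosets of
`⟨g⟩`, and `R[G] ⧸ (1 - g)R[G] ≅ R[G ⧸ ⟨g⟩]`, since `1 - h ∈ (1 - g)R[G]` for every `h ∈ ⟨g⟩`.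
Both are free of rank `[G : ⟨g⟩]`, which is `gcd(n, k)` for `G = ℤ/n` and `g = k`.
-/

open LinearMap (ker range fst snd)
open MonoidAlgebra

section DiffPair

variable {S M : Type*} [Ring S] [AddCommGroup M] [Module S M] (T : M →ₗ[S] M)

def diffPair : M × M →ₗ[S] M × M :=
  (fst S M M - T ∘ₗ snd S M M).prod (fst S M M - snd S M M)

lemma diffPair_apply (x y : M) : diffPair T (x, y) = (x - T y, x - y) := rfl

lemma ker_diffPair :
    ker (diffPair T) = (ker (LinearMap.id - T)).map (LinearMap.id.prod LinearMap.id) := by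
  ext ⟨x, y⟩
  simp only [LinearMap.mem_ker, diffPair_apply, Prod.mk_eq_zero, sub_eq_zero, Submodule.mem_map,
    LinearMap.prod_apply, LinearMap.id_coe, id, LinearMap.sub_apply]
  constructor
  · rintro ⟨hxy, rfl⟩
    exact ⟨x, hxy, rfl⟩
  · rintro ⟨z, hz, rfl, rfl⟩
    exact ⟨hz, rfl⟩

noncomputable def kerDiffPairEquiv : ker (diffPair T) ≃ₗ[S] ker (LinearMap.id - T) :=
  (LinearEquiv.ofEq _ _ (ker_diffPair T)).trans
    (Submodule.equivMapOfInjective _ (fun _ _ h => congrArg Prod.fst h) _).symm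

lemma range_diffPair :
    range (diffPair T) = ker ((range (LinearMap.id - T)).mkQ ∘ₗ (fst S M M - snd S M M)) := by
  ext ⟨x, y⟩
  simp only [LinearMap.mem_range, LinearMap.mem_ker, LinearMap.comp_apply, LinearMap.sub_apply,
    LinearMap.fst_apply, LinearMap.snd_apply, Submodule.mkQ_apply, Submodule.Quotient.mk_eq_zero,
    Prod.exists, diffPair_apply, Prod.mk.injEq, LinearMap.id_coe, id]
  constructor
  · rintro ⟨u, v, rfl, rfl⟩
    exact ⟨v, by abel⟩
  · rintro ⟨v, hv⟩
    exact ⟨y + v, v, by rw [add_sub_assoc, hv]; abel, by abel⟩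

noncomputable def cokerDiffPairEquiv :
    ((M × M) ⧸ range (diffPair T)) ≃ₗ[S] M ⧸ range (LinearMap.id - T) :=
  (Submodule.quotEquivOfEq _ _ (range_diffPair T)).trans
    (LinearMap.quotKerEquivOfSurjective _ <| (Submodule.mkQ_surjective _).comp
      fun x => ⟨(x, 0), by simp⟩)

end DiffPair

lemma LinearMap.mem_ker_id_sub_mulLeft {R A : Type*} [CommSemiring R] [Ring A] [Algebra R A]
    {a f : A} : f ∈ ker (LinearMap.id - LinearMap.mulLeft R a) ↔ a * f = f := by
  simp [sub_eq_zero, eq_comm]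

namespace MonoidAlgebra

lemma of_mul_eq_self_of_mem_zpowers {R G : Type*} [Semiring R] [Group G] {g h : G}
    {f : MonoidAlgebra R G} (hf : of R G g * f = f) (hh : h ∈ Subgroup.zpowers g) :
    of R G h * f = f := by
  let fixing : Subgroup G :=
    { carrier := {h | of R G h * f = f}
      one_mem' := by rw [Set.mem_ofPred_eq, map_one, one_mul]
      mul_mem' := fun {a b} ha hb => by rw [Set.mem_ofPred_eq, map_mul, mul_assoc, hb, ha]
      inv_mem' := fun {a} ha => by
        rw [Set.mem_ofPred_eq] at ha ⊢
        conv_lhs => rw [← ha]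
        rw [← mul_assoc, ← map_mul, inv_mul_cancel, map_one, one_mul] }
  exact Subgroup.zpowers_le.2 (show g ∈ fixing from hf) hh

variable {R G : Type*} [CommRing R] [CommGroup G] (g : G)

lemma coeff_eq_of_mk_eq {f : MonoidAlgebra R G} (hf : of R G g * f = f) {x y : G}
    (hxy : (x : G ⧸ Subgroup.zpowers g) = y) : f.coeff x = f.coeff y := by
  have := of_mul_eq_self_of_mem_zpowers hf (QuotientGroup.eq.1 hxy)
  calc f.coeff x = (of R G (x⁻¹ * y) * f).coeff y := by
        rw [of_apply, coeff_single_mul_apply, one_mul]; simp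
    _ = f.coeff y := by rw [this]

noncomputable def fixedPointsEquiv [Finite G] :
    ker (LinearMap.id - LinearMap.mulLeft R (of R G g)) ≃ₗ[R] (G ⧸ Subgroup.zpowers g → R) where
  toFun f := Quotient.lift (f : MonoidAlgebra R G).coeff fun _ _ hxy =>
    coeff_eq_of_mk_eq g (LinearMap.mem_ker_id_sub_mulLeft.1 f.2) (Quotient.sound hxy)
  invFun F := ⟨ofCoeff (Finsupp.equivFunOnFinite.symm (F ∘ QuotientGroup.mk)), by
    rw [LinearMap.mem_ker_id_sub_mulLeft]
    ext y
    simp [of_apply, coeff_single_mul_apply,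
      (QuotientGroup.eq_one_iff g).2 (Subgroup.mem_zpowers g)]⟩
  map_add' f f' := by ext ⟨x⟩; rfl
  map_smul' c f := by ext ⟨x⟩; rfl
  left_inv f := by ext x; rfl
  right_inv F := by ext ⟨x⟩; rfl

lemma sub_of_mul_mem_range_of_mem_zpowers (f : MonoidAlgebra R G) {h : G}
    (hh : h ∈ Subgroup.zpowers g) :
    f - of R G h * f ∈ range (LinearMap.id - LinearMap.mulLeft R (of R G g)) := by
  let coboundaries : Subgroup G :=
    { carrier := {h | ∀ f, f - of R G h * f ∈ range (LinearMap.id - LinearMap.mulLeft R (of R G g))}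
      one_mem' := fun f => by rw [map_one, one_mul, sub_self]; exact zero_mem _
      mul_mem' := fun {a b} ha hb f => by
        have := add_mem (ha f) (hb (of R G a * f))
        rwa [sub_add_sub_cancel, ← mul_assoc, ← map_mul, mul_comm b] at this
      inv_mem' := fun {a} ha f => by
        have := neg_mem (ha (of R G a⁻¹ * f))
        rwa [neg_sub, ← mul_assoc, ← map_mul, mul_inv_cancel, map_one, one_mul] at this }
  exact Subgroup.zpowers_le.2 (show g ∈ coboundaries from fun f => ⟨f, rfl⟩) hh f

lemma single_sub_single_mem_range {x y : G} (hxy : (x : G ⧸ Subgroup.zpowers g) = y) (c : R) :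
    single x c - single y c ∈ range (LinearMap.id - LinearMap.mulLeft R (of R G g)) := by
  have := sub_of_mul_mem_range_of_mem_zpowers g (single x c) (QuotientGroup.eq.1 hxy)
  rwa [of_apply R G (x⁻¹ * y), single_mul_single, one_mul, mul_comm, mul_inv_cancel_left] at this

lemma mapDomainAlgHom_mk'_of_self :
    mapDomainAlgHom R R (QuotientGroup.mk' (Subgroup.zpowers g)) (of R G g) = 1 := by
  rw [of_apply, mapDomainAlgHom_apply, mapDomain_single, QuotientGroup.mk'_apply,
    (QuotientGroup.eq_one_iff g).2 (Subgroup.mem_zpowers g), one_def]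

lemma range_id_sub_mulLeft_le_ker_mapDomainAlgHom :
    range (LinearMap.id - LinearMap.mulLeft R (of R G g)) ≤
      ker (mapDomainAlgHom R R (QuotientGroup.mk' (Subgroup.zpowers g))).toLinearMap :=
  LinearMap.range_le_ker_iff.2 <| LinearMap.ext fun f => by
    rw [LinearMap.comp_apply, AlgHom.toLinearMap_apply, LinearMap.sub_apply, LinearMap.id_apply,
      LinearMap.mulLeft_apply, map_sub, map_mul, mapDomainAlgHom_mk'_of_self, one_mul, sub_self,
      LinearMap.zero_apply]

noncomputable def coinvariantsEquiv :
    (MonoidAlgebra R G ⧸ range (LinearMap.id - LinearMap.mulLeft R (of R G g))) ≃ₗ[R]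
      MonoidAlgebra R (G ⧸ Subgroup.zpowers g) :=
  LinearEquiv.ofLinearMap
    ((range _).liftQ _ (range_id_sub_mulLeft_le_ker_mapDomainAlgHom g))
    ((MonoidAlgebra.basis (G ⧸ Subgroup.zpowers g) R).constr R fun c =>
      Quotient.liftOn' c (fun x => Submodule.Quotient.mk (single x 1)) fun _ _ hxy =>
        (Submodule.Quotient.eq _).2 (single_sub_single_mem_range g (Quotient.sound hxy) 1))
    ((MonoidAlgebra.basis _ R).ext fun c => by
      induction c using QuotientGroup.induction_on
      rw [LinearMap.comp_apply, Module.Basis.constr_basis]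
      simp [basis_apply])
    (Submodule.linearMap_qext _ <| (MonoidAlgebra.basis G R).ext fun x => by
      rw [LinearMap.comp_apply, LinearMap.comp_apply, LinearMap.comp_apply, Submodule.mkQ_apply,
        Submodule.liftQ_apply, AlgHom.toLinearMap_apply, basis_apply, mapDomainAlgHom_apply,
        mapDomain_single, ← basis_apply, Module.Basis.constr_basis]
      rfl)

end MonoidAlgebra

lemma ZMod.addOrderOf_intCast {n : ℕ} (hn : n ≠ 0) (k : ℤ) :
    addOrderOf (k : ZMod n) = n / Int.gcd n k := by
  rcases Int.natAbs_eq k with hk | hk <;> rw [hk]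
  · rw [Int.cast_natCast, ZMod.addOrderOf_coe _ hn, Int.gcd_natCast_natCast]
  · rw [Int.cast_neg, addOrderOf_neg, Int.cast_natCast, ZMod.addOrderOf_coe _ hn, Int.gcd_neg,
      Int.gcd_natCast_natCast]

lemma card_quotient_zpowers_ofAdd_intCast (n : ℕ) [NeZero n] (k : ℤ) :
    Nat.card (Multiplicative (ZMod n) ⧸ Subgroup.zpowers (Multiplicative.ofAdd (k : ZMod n))) =
      Int.gcd n k := by
  have h := (Subgroup.zpowers (Multiplicative.ofAdd (k : ZMod n))).index_mul_card
  rw [Nat.card_zpowers, orderOf_ofAdd_eq_addOrderOf, ZMod.addOrderOf_intCast (NeZero.ne n),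
    show Nat.card (Multiplicative (ZMod n)) = n from Nat.card_zmod n] at h
  have hd : Int.gcd n k ∣ n := Int.natCast_dvd_natCast.1 (Int.gcd_dvd_left _ _)
  have hpos : 0 < n / Int.gcd n k :=
    Nat.div_pos (Nat.le_of_dvd (NeZero.pos n) hd)
      (Int.gcd_pos_of_ne_zero_left k (Int.natCast_ne_zero.2 (NeZero.ne n)))
  rw [← Subgroup.index, Nat.eq_div_of_mul_eq_left hpos.ne' h, Nat.div_div_self hd (NeZero.ne n)]

/-- For `R = ℤ[ZMod n]`, `a = g^k`, and the ℤ-linear map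
`φ(x,y) = (x - a·y, x - y)` on `R × R`, both `ker φ` and `coker φ` are free abelian
groups of rank `gcd n k`. -/
theorem stmt_17 (n : ℕ) (hn : 0 < n) (k : ℤ)
    (φ : (MonoidAlgebra ℤ (Multiplicative (ZMod n)) ×
            MonoidAlgebra ℤ (Multiplicative (ZMod n))) →ₗ[ℤ]
         (MonoidAlgebra ℤ (Multiplicative (ZMod n)) ×
            MonoidAlgebra ℤ (Multiplicative (ZMod n))))
    (hφ : ∀ x y : MonoidAlgebra ℤ (Multiplicative (ZMod n)),
      φ (x, y) = (x - MonoidAlgebra.of ℤ (Multiplicative (ZMod n))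
          (Multiplicative.ofAdd ((k : ZMod n))) * y, x - y)) :
    Module.Free ℤ (LinearMap.ker φ) ∧
    Module.finrank ℤ (LinearMap.ker φ) = Int.gcd (n : ℤ) k ∧
    Module.Free ℤ ((MonoidAlgebra ℤ (Multiplicative (ZMod n)) ×
        MonoidAlgebra ℤ (Multiplicative (ZMod n))) ⧸ LinearMap.range φ) ∧
    Module.finrank ℤ ((MonoidAlgebra ℤ (Multiplicative (ZMod n)) ×
        MonoidAlgebra ℤ (Multiplicative (ZMod n))) ⧸ LinearMap.range φ)
      = Int.gcd (n : ℤ) k := by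
  have : NeZero n := ⟨hn.ne'⟩
  set g := Multiplicative.ofAdd (k : ZMod n)
  obtain rfl : φ = diffPair (LinearMap.mulLeft ℤ (of ℤ _ g)) :=
    LinearMap.ext fun p => hφ p.1 p.2
  let bKer := (Pi.basisFun ℤ _).map
    ((kerDiffPairEquiv (LinearMap.mulLeft ℤ (of ℤ _ g))).trans (fixedPointsEquiv g)).symm
  let bCoker := (MonoidAlgebra.basis _ ℤ).map
    ((cokerDiffPairEquiv (LinearMap.mulLeft ℤ (of ℤ _ g))).trans (coinvariantsEquiv g)).symm
  have hcard := card_quotient_zpowers_ofAdd_intCast n k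
  exact ⟨.of_basis bKer, by rw [Module.finrank_eq_nat_card_basis bKer, hcard],
    .of_basis bCoker, by rw [Module.finrank_eq_nat_card_basis bCoker, hcard]⟩
end
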